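/- arXiv:1511.04223 — 2 statements merged into one kernel-verified Lean document; each statement's English description precedes it below -/
import Mathlib

section
/- The function f(τ) = 2 − τ·sin(τ) − 2·cos(τ) is non-negative on [0, π]. -/
/-!
With `x = τ / 2` the double-angle formulas factor the function as
`4 sin x (sin x - x cos x)`, and `x cos x ≤ sin x` on `[0, π]` is `x ≤ tan x` where `cos x > 0`
and trivial where `cos x ≤ 0`. Hence the function is in fact non-negative on `[0, 2π]`.
-/

open Real

theorem Real.mul_cos_le_sin {x : ℝ} (h0 : 0 ≤ x) (hπ : x ≤ π) : x * cos x ≤ sin x := by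
  have hsin : 0 ≤ sin x := sin_nonneg_of_nonneg_of_le_pi h0 hπ
  rcases le_or_gt (cos x) 0 with hcos | hcos
  · nlinarith [mul_nonpos_of_nonneg_of_nonpos h0 hcos]
  · have hx : x < π / 2 := by
      by_contra! hx
      linarith [cos_nonpos_of_pi_div_two_le_of_le hx (by linarith)]
    have := le_tan h0 hx
    rwa [tan_eq_sin_div_cos, le_div_iff₀ hcos] at this

theorem Real.two_sub_mul_sin_sub_two_mul_cos_eq (τ : ℝ) :
    2 - τ * sin τ - 2 * cos τ = 4 * sin (τ / 2) * (sin (τ / 2) - τ / 2 * cos (τ / 2)) := by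
  have hτ : τ = 2 * (τ / 2) := by ring
  conv_lhs => rw [hτ, sin_two_mul, cos_two_mul]
  nlinarith [sin_sq_add_cos_sq (τ / 2)]

theorem Real.two_sub_mul_sin_sub_two_mul_cos_nonneg {τ : ℝ} (h0 : 0 ≤ τ) (h2π : τ ≤ 2 * π) :
    0 ≤ 2 - τ * sin τ - 2 * cos τ := by
  have hx0 : 0 ≤ τ / 2 := by positivity
  have hxπ : τ / 2 ≤ π := by linarith
  rw [two_sub_mul_sin_sub_two_mul_cos_eq]
  exact mul_nonneg (mul_nonneg (by norm_num) (sin_nonneg_of_nonneg_of_le_pi hx0 hxπ))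
    (sub_nonneg.2 (mul_cos_le_sin hx0 hxπ))

/-- The function `f(τ) = 2 − τ·sin τ − 2·cos τ` is non-negative on `[0, π]`. -/
theorem stmt_1 (τ : ℝ) (hτ : τ ∈ Set.Icc 0 Real.pi) :
    0 ≤ 2 - τ * Real.sin τ - 2 * Real.cos τ :=
  two_sub_mul_sin_sub_two_mul_cos_nonneg hτ.1 (by linarith [hτ.2, pi_pos])
end

section
/- Let f : [a−β, a] → ℝ be continuous, non-negative, and non-decreasing. Then sup_{τ ∈ [a−β, a]} (∫_{a−β}^{τ} f(s) ds)·(∫_{τ}^{a} 1/f(s) ds) ≤ β²/4, provided f > 0 on (a−β, a]. -/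
/-! Bound `f` by `f τ` on `[a − β, τ]` and `1/f` by `1/f τ` on `[τ, a]`: the factors `f τ` cancel
and the product of the two integrals is at most `(τ − (a − β)) (a − τ) ≤ β² / 4` (AM–GM). -/

open Set intervalIntegral

theorem MonotoneOn.intervalIntegral_le_mul_right {f : ℝ → ℝ} {a b : ℝ} (hab : a ≤ b)
    (hf : MonotoneOn f (Icc a b)) : ∫ s in a..b, f s ≤ (b - a) * f b := by
  have hle : ∀ s ∈ Icc a b, f s ≤ f b := fun s hs => hf hs (right_mem_Icc.2 hab) hs.2
  have hint : IntervalIntegrable f MeasureTheory.volume a b :=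
    (uIcc_of_le hab ▸ hf).intervalIntegrable
  exact (integral_mono_on hab hint intervalIntegrable_const hle).trans_eq
    (by rw [integral_const, smul_eq_mul])

theorem AntitoneOn.intervalIntegral_le_mul_left {f : ℝ → ℝ} {a b : ℝ} (hab : a ≤ b)
    (hf : AntitoneOn f (Icc a b)) : ∫ s in a..b, f s ≤ (b - a) * f a := by
  have hle : ∀ s ∈ Icc a b, f s ≤ f a := fun s hs => hf (left_mem_Icc.2 hab) hs hs.1
  have hint : IntervalIntegrable f MeasureTheory.volume a b :=
    (uIcc_of_le hab ▸ hf).intervalIntegrable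
  exact (integral_mono_on hab hint intervalIntegrable_const hle).trans_eq
    (by rw [integral_const, smul_eq_mul])

theorem MonotoneOn.one_div_antitoneOn {f : ℝ → ℝ} {s : Set ℝ} (hf : MonotoneOn f s)
    (hpos : ∀ x ∈ s, 0 < f x) : AntitoneOn (fun x => 1 / f x) s :=
  fun _ hx _ hy hxy => one_div_le_one_div_of_le (hpos _ hx) (hf hx hy hxy)

theorem MonotoneOn.integral_mul_integral_one_div_le {f : ℝ → ℝ} {c τ d : ℝ}
    (hcτ : c ≤ τ) (hτd : τ ≤ d) (hf : MonotoneOn f (Icc c d))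
    (hpos : ∀ s ∈ Icc τ d, 0 < f s) :
    (∫ s in c..τ, f s) * (∫ s in τ..d, 1 / f s) ≤ (τ - c) * (d - τ) := by
  have hfτ : 0 < f τ := hpos τ (left_mem_Icc.2 hτd)
  have hleft := (hf.mono (Icc_subset_Icc_right hτd)).intervalIntegral_le_mul_right hcτ
  have hright := ((hf.mono (Icc_subset_Icc_left hcτ)).one_div_antitoneOn hpos
    ).intervalIntegral_le_mul_left hτd
  have hright_nonneg : 0 ≤ ∫ s in τ..d, 1 / f s :=
    integral_nonneg hτd fun s hs => (one_div_pos.2 (hpos s hs)).le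
  calc (∫ s in c..τ, f s) * (∫ s in τ..d, 1 / f s)
      ≤ ((τ - c) * f τ) * ((d - τ) * (1 / f τ)) :=
        mul_le_mul hleft hright hright_nonneg (mul_nonneg (sub_nonneg.2 hcτ) hfτ.le)
    _ = (τ - c) * (d - τ) := by field_simp

theorem stmt_9_general (a β : ℝ) (f : ℝ → ℝ)
    (hmono : MonotoneOn f (Set.Icc (a - β) a))
    (hpos : ∀ s ∈ Set.Ioc (a - β) a, 0 < f s) :
    ∀ τ ∈ Set.Icc (a - β) a,
      (∫ s in (a - β)..τ, f s) * (∫ s in τ..a, 1 / f s) ≤ β ^ 2 / 4 := by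
  rintro τ ⟨hτ_left, hτ_right⟩
  rcases hτ_left.eq_or_lt with rfl | hτ_gt
  · rw [integral_same, zero_mul]
    positivity
  have hpos' : ∀ s ∈ Icc τ a, 0 < f s := fun s hs => hpos s ⟨hτ_gt.trans_le hs.1, hs.2⟩
  calc (∫ s in (a - β)..τ, f s) * (∫ s in τ..a, 1 / f s)
      ≤ (τ - (a - β)) * (a - τ) :=
        hmono.integral_mul_integral_one_div_le hτ_left hτ_right hpos'
    _ ≤ β ^ 2 / 4 := by nlinarith [four_mul_le_sq_add (τ - (a - β)) (a - τ)]

/-- Let `f : [a−β, a] → ℝ` be continuous, non-negative, non-decreasing, and positive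
on `(a−β, a]`. Then for every `τ ∈ [a−β, a]`,
`(∫_{a−β}^{τ} f) · (∫_{τ}^{a} 1/f) ≤ β²/4` (so the supremum over `τ` is `≤ β²/4`). -/
theorem stmt_9 (a β : ℝ) (hβ : 0 < β) (f : ℝ → ℝ)
    (hcont : ContinuousOn f (Set.Icc (a - β) a))
    (hnonneg : ∀ s ∈ Set.Icc (a - β) a, 0 ≤ f s)
    (hmono : MonotoneOn f (Set.Icc (a - β) a))
    (hpos : ∀ s ∈ Set.Ioc (a - β) a, 0 < f s) :
    ∀ τ ∈ Set.Icc (a - β) a,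
      (∫ s in (a - β)..τ, f s) * (∫ s in τ..a, 1 / f s) ≤ β ^ 2 / 4 :=
  stmt_9_general a β f hmono hpos
end
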